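/- arXiv:1905.06506 — 3 statements merged into one kernel-verified Lean document; each statement's English description precedes it below -/
import Mathlib

section
/- Let q ≡ 1 (mod 4) be a prime such that p = 2q + 1 is also prime, and let ψ be an even Dirichlet character modulo p (i.e. ψ(−1) = 1). Then ∑_{j=1}^{p−1} δ_ψ(j)·δ_{ψ̄}(p−j) ≠ 0. -/
/-!
Write `p = 2q + 1`. As `ψ` is even, Euler's criterion gives `ψ(a)^q = ψ(a^q) = ψ(±1) = 1`
for `a ≠ 0`, so the sum, expanded as `∑ ψ(d) ψ̄(e)` over the triples `(j, d, e)` with `d ∣ j`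
and `e ∣ p - j`, is a sum of `q`-th roots of unity. Since `Φ_q = 1 + X + ⋯ + X^(q-1)` is the
minimal polynomial of a primitive `q`-th root of unity, such a sum vanishes only if every
`q`-th root of unity occurs equally often; then the number `T` of triples is `q` times the
number of triples of value `1`, and the triples `(j, 1, 1)` and `(d, d, p - d)` give `T ≥ 4q²`.

On the other hand `T = ∑ τ(j) τ(p - j) < 4q²`: as `gcd(d, e)` divides the prime `p`, the pair
`(d, e)` occurs for at most `(p - 2)/(de) + 1` values of `j`, and summing over the `qp` pairs
with `d + e ≤ p` gives `T ≤ (⌈log₂ 2q⌉ + 1)² (p - 2) + qp`. The cases `q < 83` are checked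
directly.
-/

open Finset

/-- `δ_χ(n) = ∑_{0<d∣n} χ(d)` for `n ≥ 1`. -/
noncomputable def deltaChar {N : ℕ} (χ : DirichletCharacter ℂ N) (n : ℕ) : ℂ :=
  ∑ d ∈ n.divisors, χ d

/-- The complex-conjugate character `χ̄`. -/
noncomputable def conjChar {N : ℕ} (χ : DirichletCharacter ℂ N) : DirichletCharacter ℂ N :=
  χ.ringHomComp (starRingEnd ℂ)

open Polynomial in
theorem IsPrimitiveRoot.eq_of_sum_mul_pow_eq_zero {K : Type*} [Field K] [CharZero K] {q : ℕ}
    (hq : q.Prime) {ζ : K} (hζ : IsPrimitiveRoot ζ q) {c : ℕ → ℚ}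
    (h : ∑ u ∈ range q, (c u : K) * ζ ^ u = 0) {u : ℕ} (hu : u < q) : c u = c 0 := by
  have := Fact.mk hq
  set P : ℚ[X] := ∑ i ∈ range q, monomial i (c i)
  have hc (v : ℕ) (hv : v < q) : P.coeff v = c v := by simp [P, coeff_monomial, hv]
  have hdvd : cyclotomic q ℚ ∣ P := cyclotomic_eq_minpoly_rat hζ hq.pos ▸ minpoly.dvd ℚ ζ (by
    simpa [P, aeval_monomial] using h)
  have hdeg : P.natDegree ≤ (cyclotomic q ℚ).natDegree := by
    rw [natDegree_cyclotomic, Nat.totient_prime hq]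
    exact natDegree_sum_le_of_forall_le _ _ fun i hi =>
      (natDegree_monomial_le _).trans (Nat.le_sub_one_of_lt (mem_range.1 hi))
  have hP := eq_leadingCoeff_mul_of_monic_of_dvd_of_natDegree_le (cyclotomic.monic q ℚ) hdvd hdeg
  have hlead (v : ℕ) (hv : v < q) : P.coeff v = P.leadingCoeff := by
    conv_lhs => rw [hP]
    simp [cyclotomic_prime, coeff_X_pow, hv]
  rw [← hc u hu, ← hc 0 hq.pos, hlead u hu, hlead 0 hq.pos]

theorem prime_mul_card_filter_eq_one_eq_card_of_sum_eq_zero {ι : Type*} {q : ℕ} (hq : q.Prime)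
    {s : Finset ι} {v : ι → ℂ} (hv : ∀ t ∈ s, v t ^ q = 1) (h : ∑ t ∈ s, v t = 0) :
    q * #{t ∈ s | v t = 1} = #s := by
  have := NeZero.mk hq.ne_zero
  have hζ := Complex.isPrimitiveRoot_exp q hq.ne_zero
  set ζ := Complex.exp (2 * Real.pi * Complex.I / q)
  set c : ℕ → ℕ := fun u => #{t ∈ s | v t = ζ ^ u}
  have hmaps (t) (ht : t ∈ s) : v t ∈ (range q).image (ζ ^ ·) := by
    obtain ⟨i, hi, hζi⟩ := hζ.eq_pow_of_pow_eq_one (hv t ht)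
    exact mem_image.2 ⟨i, mem_range.2 hi, hζi⟩
  have hinj : Set.InjOn (ζ ^ ·) (range q) := fun i hi j hj hij =>
    hζ.pow_inj (mem_range.1 hi) (mem_range.1 hj) hij
  have hsum : ∑ u ∈ range q, ((c u : ℚ) : ℂ) * ζ ^ u = 0 := by
    rw [← h, ← sum_fiberwise_of_maps_to hmaps, sum_image hinj]
    refine sum_congr rfl fun u _ => ?_
    rw [sum_congr rfl fun t ht => (mem_filter.1 ht).2, sum_const, nsmul_eq_mul, Rat.cast_natCast]
  have hcard : #s = ∑ u ∈ range q, c u := by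
    rw [card_eq_sum_card_fiberwise hmaps, sum_image hinj]
  have hc (u) (hu : u ∈ range q) : c u = c 0 := by
    exact_mod_cast hζ.eq_of_sum_mul_pow_eq_zero hq hsum (mem_range.1 hu)
  rw [hcard, sum_congr rfl hc, sum_const, card_range, smul_eq_mul]
  simp [c]

theorem DirichletCharacter.Even.pow_div_two_eq_one {R : Type*} [CommRing R] {p : ℕ}
    [Fact p.Prime] {χ : DirichletCharacter R p} (hχ : χ.Even) {a : ZMod p} (ha : a ≠ 0) :
    χ a ^ (p / 2) = 1 := by
  rw [← map_pow]
  rcases ZMod.pow_div_two_eq_neg_one_or_one p ha with h | h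
  · rw [h, map_one]
  · rw [h]; exact hχ

@[simp]
theorem conjChar_apply {N : ℕ} (χ : DirichletCharacter ℂ N) (a : ZMod N) :
    conjChar χ a = starRingEnd ℂ (χ a) :=
  rfl

theorem DirichletCharacter.Even.conjChar {N : ℕ} {χ : DirichletCharacter ℂ N} (hχ : χ.Even) :
    (conjChar χ).Even := by
  unfold DirichletCharacter.Even at hχ ⊢
  simp [hχ]

theorem mul_conjChar_apply_self {N : ℕ} (χ : DirichletCharacter ℂ N) {a : ZMod N}
    (ha : IsUnit a) : χ a * conjChar χ a = 1 := by
  rw [conjChar_apply, Complex.mul_conj', ← ha.unit_spec, DirichletCharacter.unit_norm_eq_one]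
  norm_num

theorem ZMod.natCast_ne_zero_of_mem_Icc {n d : ℕ} (hd : d ∈ Icc 1 n) :
    (d : ZMod (n + 1)) ≠ 0 := by
  rw [mem_Icc] at hd
  rw [Ne, ZMod.natCast_eq_zero_iff]
  exact fun h => absurd (Nat.le_of_dvd (by omega) h) (by omega)

def divisorTriples (n : ℕ) : Finset (Σ _ : ℕ, ℕ × ℕ) :=
  (Icc 1 n).sigma fun j => j.divisors ×ˢ (n + 1 - j).divisors

theorem mem_divisorTriples {n : ℕ} {t : Σ _ : ℕ, ℕ × ℕ} :
    t ∈ divisorTriples n ↔ t.1 ∈ Icc 1 n ∧ t.2.1 ∣ t.1 ∧ t.2.2 ∣ n + 1 - t.1 := by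
  simp only [divisorTriples, mem_sigma, mem_product, Nat.mem_divisors, mem_Icc]
  omega

theorem le_of_mem_divisorTriples {n : ℕ} {t : Σ _ : ℕ, ℕ × ℕ} (ht : t ∈ divisorTriples n) :
    1 ≤ t.2.1 ∧ 1 ≤ t.2.2 ∧ t.2.1 + t.2.2 ≤ n + 1 := by
  obtain ⟨hj, hd, he⟩ := mem_divisorTriples.1 ht
  rw [mem_Icc] at hj
  have := Nat.le_of_dvd (by omega) hd
  have := Nat.le_of_dvd (by omega) he
  have := Nat.pos_of_dvd_of_pos hd (by omega)
  have := Nat.pos_of_dvd_of_pos he (by omega)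
  omega

theorem sum_deltaChar_mul_deltaChar_eq_sum_divisorTriples {N : ℕ} (χ χ' : DirichletCharacter ℂ N)
    (n : ℕ) :
    ∑ j ∈ Icc 1 n, deltaChar χ j * deltaChar χ' (n + 1 - j) =
      ∑ t ∈ divisorTriples n, χ t.2.1 * χ' t.2.2 := by
  simp only [divisorTriples, sum_sigma, sum_product, deltaChar, sum_mul_sum]

theorem mul_conjChar_pow_div_two_eq_one {n : ℕ} [Fact (n + 1).Prime]
    {χ : DirichletCharacter ℂ (n + 1)} (hχ : χ.Even) {t : Σ _ : ℕ, ℕ × ℕ}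
    (ht : t ∈ divisorTriples n) : (χ t.2.1 * conjChar χ t.2.2) ^ ((n + 1) / 2) = 1 := by
  have := le_of_mem_divisorTriples ht
  rw [mul_pow, hχ.pow_div_two_eq_one (ZMod.natCast_ne_zero_of_mem_Icc (by simp; omega)),
    hχ.conjChar.pow_div_two_eq_one (ZMod.natCast_ne_zero_of_mem_Icc (by simp; omega)), one_mul]

theorem two_mul_le_card_divisorTriples_filter_eq_one {n : ℕ} (hn : 2 ≤ n) [Fact (n + 1).Prime]
    {χ : DirichletCharacter ℂ (n + 1)} (hχ : χ.Even) :
    2 * n ≤ #{t ∈ divisorTriples n | χ t.2.1 * conjChar χ t.2.2 = 1} := by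
  set A := (Icc 1 n).image fun j => (⟨j, 1, 1⟩ : Σ _ : ℕ, ℕ × ℕ)
  set B := (Icc 1 n).image fun d => (⟨d, d, n + 1 - d⟩ : Σ _ : ℕ, ℕ × ℕ)
  have hdisj : Disjoint A B := by
    simp only [A, B, disjoint_left, mem_image, mem_Icc]
    rintro _ ⟨j, hj, rfl⟩ ⟨d, hd, h⟩
    simp only [Sigma.mk.injEq, heq_eq_eq, Prod.mk.injEq] at h
    omega
  have hA : A ⊆ {t ∈ divisorTriples n | χ t.2.1 * conjChar χ t.2.2 = 1} := by
    simp only [A, subset_iff, mem_image, mem_filter, mem_divisorTriples]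
    rintro _ ⟨j, hj, rfl⟩
    simpa using hj
  have hB : B ⊆ {t ∈ divisorTriples n | χ t.2.1 * conjChar χ t.2.2 = 1} := by
    simp only [B, subset_iff, mem_image, mem_filter, mem_divisorTriples]
    rintro _ ⟨d, hd, rfl⟩
    have hneg : ((n + 1 - d : ℕ) : ZMod (n + 1)) = -d := by
      rw [Nat.cast_sub (by simp at hd; omega), ZMod.natCast_self, zero_sub]
    refine ⟨⟨hd, dvd_rfl, dvd_rfl⟩, ?_⟩
    rw [hneg, hχ.conjChar.eval_neg]
    exact mul_conjChar_apply_self χ (ZMod.natCast_ne_zero_of_mem_Icc hd).isUnit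
  calc 2 * n = #(A ∪ B) := by
        rw [card_union_of_disjoint hdisj,
          card_image_of_injective _ fun _ _ h => congrArg Sigma.fst h,
          card_image_of_injective _ fun _ _ h => congrArg Sigma.fst h, Nat.card_Icc]
        omega
    _ ≤ _ := card_le_card (union_subset hA hB)

theorem sum_Icc_div_le_of_le_two_pow (X : ℕ) {n K : ℕ} (hn : n ≤ 2 ^ K) :
    ∑ e ∈ Icc 1 n, X / e ≤ (K + 1) * X := by
  refine (sum_le_sum_of_subset (Icc_subset_Icc_right hn)).trans ?_
  clear hn
  induction K with
  | zero => simp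
  | succ K ih =>
    have tail : ∑ e ∈ Ioc (2 ^ K) (2 ^ (K + 1)), X / e ≤ X := calc
      _ ≤ #(Ioc (2 ^ K) (2 ^ (K + 1))) • (X / 2 ^ K) :=
          sum_le_card_nsmul _ _ _ fun e he =>
            Nat.div_le_div_left (mem_Ioc.1 he).1.le (by positivity)
      _ = 2 ^ K * (X / 2 ^ K) := by rw [Nat.card_Ioc, smul_eq_mul, pow_succ]; congr 1; omega
      _ ≤ X := Nat.mul_div_le X _
    change ∑ e ∈ Ioc 0 (2 ^ (K + 1)), X / e ≤ _
    rw [← sum_Ioc_consecutive _ (Nat.zero_le _) (Nat.pow_le_pow_right two_pos K.le_succ)]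
    exact (add_le_add ih tail).trans_eq (by ring)

theorem sum_Icc_sum_Icc_div_mul_le (X : ℕ) {n K : ℕ} (hn : n ≤ 2 ^ K) :
    ∑ d ∈ Icc 1 n, ∑ e ∈ Icc 1 n, X / (d * e) ≤ (K + 1) ^ 2 * X := calc
  _ = ∑ d ∈ Icc 1 n, ∑ e ∈ Icc 1 n, X / d / e := by simp only [Nat.div_div_eq_div_mul]
  _ ≤ ∑ d ∈ Icc 1 n, (K + 1) * (X / d) :=
      sum_le_sum fun d _ => sum_Icc_div_le_of_le_two_pow _ hn
  _ = (K + 1) * ∑ d ∈ Icc 1 n, X / d := (mul_sum ..).symm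
  _ ≤ (K + 1) ^ 2 * X := by
      rw [sq, mul_assoc]; exact Nat.mul_le_mul_left _ (sum_Icc_div_le_of_le_two_pow _ hn)

theorem card_le_div_add_one_of_modEq {s : Finset ℕ} {n m : ℕ} (hs : s ⊆ Icc 1 n)
    (h : ∀ i ∈ s, ∀ j ∈ s, i ≡ j [MOD m]) : #s ≤ (n - 1) / m + 1 := by
  rcases s.eq_empty_or_nonempty with rfl | hne
  · simp
  set i := s.min' hne
  have hle (j) (hj : j ∈ s) : i ≤ j ∧ j ≤ n := ⟨s.min'_le j hj, (mem_Icc.1 (hs hj)).2⟩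
  have hi : 1 ≤ i := (mem_Icc.1 (hs (s.min'_mem hne))).1
  have hdvd (j) (hj : j ∈ s) : m * ((j - i) / m) = j - i :=
    Nat.mul_div_cancel' <| (Nat.modEq_iff_dvd' (hle j hj).1).1 (h i (s.min'_mem hne) j hj)
  calc #s ≤ #(range ((n - 1) / m + 1)) := by
        refine card_le_card_of_injOn (fun j => (j - i) / m) (fun j hj => ?_)
          fun j hj j' hj' hjj' => ?_
        · have := hle j hj
          exact mem_range.2 (Nat.lt_succ_of_le (Nat.div_le_div_right (by omega)))
        · have hsub : j - i = j' - i := calc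
            j - i = m * ((j - i) / m) := (hdvd j hj).symm
            _ = m * ((j' - i) / m) := congrArg (m * ·) hjj'
            _ = j' - i := hdvd j' hj'
          have := hle j hj
          have := hle j' hj'
          omega
    _ = (n - 1) / m + 1 := card_range _

theorem card_filter_dvd_dvd_le {n d e : ℕ} (hp : (n + 1).Prime) (hd : d ≤ n) :
    #{j ∈ Icc 1 n | d ∣ j ∧ e ∣ n + 1 - j} ≤ (n - 1) / (d * e) + 1 := by
  refine card_le_div_add_one_of_modEq (filter_subset _ _) fun i hi j hj => ?_
  simp only [mem_filter, mem_Icc] at hi hj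
  obtain ⟨⟨hi1, hin⟩, hdi, hei⟩ := hi
  obtain ⟨⟨hj1, hjn⟩, hdj, hej⟩ := hj
  have hcop : d.Coprime e := by
    have hsum : d.gcd e ∣ i + (n + 1 - i) :=
      Nat.dvd_add ((Nat.gcd_dvd_left d e).trans hdi) ((Nat.gcd_dvd_right d e).trans hei)
    rw [show i + (n + 1 - i) = n + 1 by omega] at hsum
    refine (hp.eq_one_or_self_of_dvd _ hsum).resolve_right fun h => ?_
    have := Nat.le_of_dvd (Nat.pos_of_dvd_of_pos hdi (by omega)) (Nat.gcd_dvd_left d e)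
    omega
  refine (Nat.modEq_and_modEq_iff_modEq_mul hcop).1 ⟨?_, ?_⟩
  · exact (Nat.modEq_zero_iff_dvd.2 hdi).trans (Nat.modEq_zero_iff_dvd.2 hdj).symm
  · refine Nat.ModEq.add_right_cancel
      ((Nat.modEq_zero_iff_dvd.2 hei).trans (Nat.modEq_zero_iff_dvd.2 hej).symm) ?_
    rw [show i + (n + 1 - i) = j + (n + 1 - j) by omega]

theorem sum_Icc_sub_eq_sum_range (n : ℕ) :
    ∑ d ∈ Icc 1 n, (n + 1 - d) = ∑ i ∈ range (n + 1), i := by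
  rw [sum_range_succ', add_zero]
  refine sum_nbij' (fun d => n - d) (fun i => n - i) ?_ ?_ ?_ ?_ ?_ <;>
    intro a ha <;> simp only [mem_Icc, mem_range] at ha ⊢ <;> omega

theorem card_sigma_Icc_mul_two (n : ℕ) :
    #((Icc 1 n).sigma fun d => Icc 1 (n + 1 - d)) * 2 = n * (n + 1) := by
  simp only [card_sigma, Nat.card_Icc, Nat.add_sub_cancel]
  rw [sum_Icc_sub_eq_sum_range, sum_range_id_mul_two, Nat.add_sub_cancel, mul_comm]

theorem card_divisorTriples_mul_two_le {n K : ℕ} (hp : (n + 1).Prime) (hK : n ≤ 2 ^ K) :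
    #(divisorTriples n) * 2 ≤ (K + 1) ^ 2 * (n - 1) * 2 + n * (n + 1) := by
  set P := (Icc 1 n).sigma fun d => Icc 1 (n + 1 - d)
  have hmaps : ∀ t ∈ divisorTriples n, (⟨t.2.1, t.2.2⟩ : Σ _ : ℕ, ℕ) ∈ P := fun t ht => by
    have := le_of_mem_divisorTriples ht
    simp only [P, mem_sigma, mem_Icc]
    omega
  have hfibre : ∀ z ∈ P, #{t ∈ divisorTriples n | (⟨t.2.1, t.2.2⟩ : Σ _ : ℕ, ℕ) = z} ≤
      (n - 1) / (z.1 * z.2) + 1 := by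
    rintro ⟨d, e⟩ hz
    simp only [P, mem_sigma, mem_Icc] at hz
    refine le_trans ?_ (card_filter_dvd_dvd_le (d := d) (e := e) hp (by omega))
    refine card_le_card_of_injOn Sigma.fst (fun t ht => ?_) fun t ht t' ht' h => ?_
    · simp only [coe_filter, Set.mem_ofPred_eq, Sigma.mk.injEq, heq_eq_eq] at ht
      obtain ⟨ht, rfl, rfl⟩ := ht
      simpa [mem_divisorTriples] using ht
    · simp only [coe_filter, Set.mem_ofPred_eq, Sigma.mk.injEq, heq_eq_eq] at ht ht'
      obtain ⟨j, d, e⟩ := t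
      obtain ⟨j', d', e'⟩ := t'
      simp_all
  have hsum : ∑ z ∈ P, (n - 1) / (z.1 * z.2) ≤ (K + 1) ^ 2 * (n - 1) := by
    rw [sum_sigma]
    refine (sum_le_sum fun d hd => sum_le_sum_of_subset (Icc_subset_Icc_right ?_)).trans
      (sum_Icc_sum_Icc_div_mul_le _ hK)
    rw [mem_Icc] at hd
    omega
  have hcard : #(divisorTriples n) ≤ ∑ z ∈ P, (n - 1) / (z.1 * z.2) + #P := by
    rw [card_eq_sum_card_fiberwise hmaps, card_eq_sum_ones P, ← sum_add_distrib]
    exact sum_le_sum hfibre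
  have hP : #P * 2 = n * (n + 1) := card_sigma_Icc_mul_two n
  omega

theorem two_mul_sq_clog_add_two_le {n : ℕ} (hn : 166 ≤ n) :
    2 * (Nat.clog 2 n + 1) ^ 2 + 2 ≤ n := by
  set K := Nat.clog 2 n
  have hK : 2 ^ (K - 1) < n := Nat.pow_pred_clog_lt_self one_lt_two (by omega)
  rcases le_or_gt K 8 with h | h
  · nlinarith
  · have key : ∀ M ≥ 9, 2 * (M + 1) ^ 2 + 2 ≤ 2 ^ (M - 1) := by
      intro M hM
      induction M, hM using Nat.le_induction with
      | base => norm_num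
      | succ M hM ih =>
        calc 2 * (M + 1 + 1) ^ 2 + 2 = (2 * (M + 1) ^ 2 + 2) + (4 * M + 6) := by ring
          _ ≤ 2 ^ (M - 1) + 2 ^ (M - 1) := add_le_add ih (by nlinarith)
          _ = 2 ^ (M + 1 - 1) := by rw [show M + 1 - 1 = M - 1 + 1 by omega, pow_succ]; ring
    exact (key K h).trans hK.le

theorem card_divisorTriples_lt_sq_of_le {n : ℕ} (hn : 166 ≤ n) (hp : (n + 1).Prime) :
    #(divisorTriples n) < n ^ 2 := by
  have hbound := card_divisorTriples_mul_two_le hp (Nat.le_pow_clog one_lt_two n)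
  have hclog := two_mul_sq_clog_add_two_le hn
  obtain ⟨m, rfl⟩ : ∃ m, n = m + 1 := ⟨n - 1, by omega⟩
  rw [Nat.add_sub_cancel] at hbound
  nlinarith

set_option maxRecDepth 10000 in
theorem card_divisorTriples_two_mul_lt_sq {q : ℕ} (hq : q.Prime) (hp : (2 * q + 1).Prime) :
    #(divisorTriples (2 * q)) < (2 * q) ^ 2 := by
  rcases lt_or_ge q 83 with hsmall | hlarge
  · interval_cases q <;> first | (norm_num at hq; done) | (norm_num at hp; done) | decide
  · exact card_divisorTriples_lt_sq_of_le (by omega) hp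

theorem even_character_sum_ne_zero_general (q : ℕ) (hq : q.Prime)
    (hp : (2 * q + 1).Prime) (ψ : DirichletCharacter ℂ (2 * q + 1))
    (hψeven : ψ (-1) = 1) :
    ∑ j ∈ Finset.Icc 1 (2 * q), deltaChar ψ j * deltaChar (conjChar ψ) (2 * q + 1 - j)
      ≠ 0 := by
  have := Fact.mk hp
  have hψ : ψ.Even := hψeven
  have hroots (t) (ht : t ∈ divisorTriples (2 * q)) : (ψ t.2.1 * conjChar ψ t.2.2) ^ q = 1 := by
    simpa only [show (2 * q + 1) / 2 = q by omega] using mul_conjChar_pow_div_two_eq_one hψ ht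
  rw [sum_deltaChar_mul_deltaChar_eq_sum_divisorTriples]
  intro hsum
  have hcount := prime_mul_card_filter_eq_one_eq_card_of_sum_eq_zero hq hroots hsum
  have hlower :=
    two_mul_le_card_divisorTriples_filter_eq_one (n := 2 * q) (by linarith [hq.two_le]) hψ
  have hupper := card_divisorTriples_two_mul_lt_sq hq hp
  nlinarith

theorem even_character_sum_ne_zero (q : ℕ) (hq : q.Prime) (hq4 : q % 4 = 1)
    (hp : (2 * q + 1).Prime) (ψ : DirichletCharacter ℂ (2 * q + 1))
    (hψeven : ψ (-1) = 1) :
    ∑ j ∈ Finset.Icc 1 (2 * q), deltaChar ψ j * deltaChar (conjChar ψ) (2 * q + 1 - j)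
      ≠ 0 :=
  even_character_sum_ne_zero_general q hq hp ψ hψeven
end

section
/- Let p be a prime, let χ be a Dirichlet character modulo p, and let j be an integer with 1 ≤ j ≤ p−1. If χ is odd (χ(−1) = −1), then δ_χ(j)·δ_{χ̄}(p−j) is purely imaginary (its real part is 0); if χ is even (χ(−1) = 1), then δ_χ(j)·δ_{χ̄}(p−j) is real (its imaginary part is 0). -/
/-!
Conjugation turns `δ_χ` into `δ_χ̄`, and for `n` prime to the modulus the involution `d ↦ n / d`
of the divisors of `n` gives `δ_χ̄(n) = χ̄(n) δ_χ(n)`. Hence `z = δ_χ(j) δ_χ̄(p - j)` satisfies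
`z̄ = χ̄(j) χ(p - j) z = χ(-1) z`, since `p - j ≡ -j`: `z` is real when `χ` is even and purely
imaginary when `χ` is odd.
-/

open Finset

variable {N : ℕ}

lemma conjChar_eq_inv [NeZero N] (χ : DirichletCharacter ℂ N) : conjChar χ = χ⁻¹ :=
  MulChar.star_eq_inv χ

lemma conj_deltaChar (χ : DirichletCharacter ℂ N) (n : ℕ) :
    starRingEnd ℂ (deltaChar χ n) = deltaChar (conjChar χ) n :=
  map_sum _ _ _

lemma inv_apply_mul_apply_of_coprime (χ : DirichletCharacter ℂ N) {n : ℕ} (hn : n.Coprime N) :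
    χ⁻¹ n * χ n = 1 := by
  have hu : IsUnit (n : ZMod N) := (ZMod.unitOfCoprime n hn).isUnit
  rw [MulChar.inv_apply_eq_inv', inv_mul_cancel₀ (hu.map χ).ne_zero]

lemma deltaChar_inv_of_coprime (χ : DirichletCharacter ℂ N) {n : ℕ} (hn : n.Coprime N) :
    deltaChar χ⁻¹ n = χ⁻¹ n * deltaChar χ n := by
  rw [deltaChar, deltaChar, ← Nat.sum_div_divisors n (fun d ↦ χ⁻¹ d), mul_sum]
  refine sum_congr rfl fun d hd ↦ ?_
  obtain ⟨e, rfl⟩ := Nat.dvd_of_mem_divisors hd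
  have hdN : d.Coprime N := Nat.Coprime.coprime_dvd_left (dvd_mul_right d e) hn
  rw [Nat.mul_div_cancel_left e (Nat.pos_of_mem_divisors hd), Nat.cast_mul, map_mul]
  linear_combination (-χ⁻¹ e) * inv_apply_mul_apply_of_coprime χ hdN

lemma conj_deltaChar_mul_deltaChar_conjChar [NeZero N] (χ : DirichletCharacter ℂ N) {m n : ℕ}
    (hm : m.Coprime N) (hn : n.Coprime N) (hnm : (n : ZMod N) = -m) :
    starRingEnd ℂ (deltaChar χ m * deltaChar (conjChar χ) n)
      = χ (-1) * (deltaChar χ m * deltaChar (conjChar χ) n) := by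
  have hχn : χ n = χ (-1) * χ m := by rw [hnm, neg_eq_neg_one_mul, map_mul]
  have hδn := deltaChar_inv_of_coprime χ⁻¹ hn
  rw [inv_inv] at hδn
  rw [map_mul, conj_deltaChar, conj_deltaChar, conjChar_eq_inv, conjChar_eq_inv, inv_inv,
    deltaChar_inv_of_coprime χ hm, hδn, hχn]
  linear_combination (χ (-1) * deltaChar χ m * deltaChar χ⁻¹ n) *
    inv_apply_mul_apply_of_coprime χ hm

theorem delta_product_real_or_imaginary (p : ℕ) (hp : p.Prime)
    (χ : DirichletCharacter ℂ p) (j : ℕ) (hj1 : 1 ≤ j) (hj2 : j ≤ p - 1) :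
    (χ (-1) = -1 → (deltaChar χ j * deltaChar (conjChar χ) (p - j)).re = 0) ∧
    (χ (-1) = 1 → (deltaChar χ j * deltaChar (conjChar χ) (p - j)).im = 0) := by
  have : NeZero p := ⟨hp.ne_zero⟩
  have hjp : j < p := by omega
  have hcast : ((p - j : ℕ) : ZMod p) = -j := by
    rw [Nat.cast_sub hjp.le, ZMod.natCast_self, zero_sub]
  have hconj := conj_deltaChar_mul_deltaChar_conjChar χ
    (Nat.coprime_of_lt_prime (by omega) hjp hp).symm
    (Nat.coprime_of_lt_prime (by omega) (by omega) hp).symm hcast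
  refine ⟨fun hodd ↦ ?_, fun heven ↦ ?_⟩
  · have hre := congrArg Complex.re hconj
    rw [hodd, Complex.conj_re, neg_one_mul, Complex.neg_re] at hre
    linarith
  · rwa [heven, one_mul, Complex.conj_eq_iff_im] at hconj
end

section
/- Let p be a prime and let χ be an odd Dirichlet character modulo p (i.e. χ(−1) = −1). Then ∑_{j=1}^{p−1} δ_χ(j)·δ_{χ̄}(p−j) = 0. -/
open Finset

/-! Pairing `j` with `p - j`, the terms of the sum cancel: for `n` prime to the modulus,
`δ_χ(n) = χ(n) δ_χ̄(n)` (substitute `d ↦ n / d` in the divisor sum), and since `χ` is odd,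
`χ(p - j) = -χ(j)`. Hence the term at `p - j` is minus the term at `j`. -/

theorem sum_Icc_eq_zero_of_apply_sub_eq_neg {R : Type*} [NonAssocRing R] [NoZeroDivisors R]
    [CharZero R] (n : ℕ) (f : ℕ → R) (hf : ∀ j ∈ Icc 1 (n - 1), f (n - j) = -f j) :
    ∑ j ∈ Icc 1 (n - 1), f j = 0 := by
  have hreflect : ∑ j ∈ Icc 1 (n - 1), f (n - j) = ∑ j ∈ Icc 1 (n - 1), f j :=
    sum_nbij' (n - ·) (n - ·) (fun j hj => by simp only [mem_Icc] at hj ⊢; omega)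
      (fun j hj => by simp only [mem_Icc] at hj ⊢; omega)
      (fun j hj => by simp only [mem_Icc] at hj; omega)
      (fun j hj => by simp only [mem_Icc] at hj; omega) (fun _ _ => rfl)
  rw [sum_congr rfl hf, sum_neg_distrib] at hreflect
  exact CharZero.neg_eq_self_iff.mp hreflect

namespace DirichletCharacter

variable {N : ℕ}

theorem conjChar_eq_inv (χ : DirichletCharacter ℂ N) : conjChar χ = χ⁻¹ := by
  rw [← MulChar.star_eq_inv]
  rfl

theorem deltaChar_inv (χ : DirichletCharacter ℂ N) {n : ℕ} (hn : n.Coprime N) :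
    deltaChar χ⁻¹ n = χ⁻¹ n * deltaChar χ n := by
  rw [deltaChar, deltaChar, ← Nat.sum_div_divisors, mul_sum]
  refine sum_congr rfl fun d hd => ?_
  have hdvd := Nat.dvd_of_mem_divisors hd
  have hdu : IsUnit (d : ZMod N) := (ZMod.isUnit_iff_coprime d N).mpr (hn.coprime_dvd_left hdvd)
  calc χ⁻¹ ((n / d : ℕ) : ZMod N)
      = χ⁻¹ ((n / d : ℕ) : ZMod N) * (χ⁻¹ * χ) d := by
        rw [MulChar.inv_mul, MulChar.one_apply hdu, mul_one]
    _ = χ⁻¹ (((n / d : ℕ) : ZMod N) * d) * χ d := by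
        rw [MulChar.coeToFun_mul, Pi.mul_apply, map_mul, mul_assoc]
    _ = χ⁻¹ n * χ d := by rw [← Nat.cast_mul, Nat.div_mul_cancel hdvd]

theorem deltaChar_mul_deltaChar_inv_of_eq_neg {χ : DirichletCharacter ℂ N} (hχ : χ.Odd)
    {a b : ℕ} (ha : a.Coprime N) (hb : b.Coprime N) (hab : (b : ZMod N) = -a) :
    deltaChar χ a * deltaChar χ⁻¹ b = -(deltaChar χ b * deltaChar χ⁻¹ a) := by
  have hδa : deltaChar χ a = χ a * deltaChar χ⁻¹ a := by
    simpa only [inv_inv] using deltaChar_inv χ⁻¹ ha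
  have hχb : χ b * χ⁻¹ b = 1 := by
    rw [mul_comm, ← Pi.mul_apply, ← MulChar.coeToFun_mul, MulChar.inv_mul,
      MulChar.one_apply ((ZMod.isUnit_iff_coprime b N).mpr hb)]
  have hχa : χ a = -χ b := by rw [hab, hχ.eval_neg, neg_neg]
  rw [hδa, deltaChar_inv χ hb, hχa]
  linear_combination (-(deltaChar χ b * deltaChar χ⁻¹ a)) * hχb

end DirichletCharacter

open DirichletCharacter in
theorem odd_character_sum_eq_zero (p : ℕ) (hp : p.Prime)
    (χ : DirichletCharacter ℂ p) (hχodd : χ (-1) = -1) :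
    ∑ j ∈ Finset.Icc 1 (p - 1), deltaChar χ j * deltaChar (conjChar χ) (p - j) = 0 := by
  have hcoprime : ∀ k, 0 < k → k < p → k.Coprime p := fun k hk0 hkp =>
    (hp.coprime_iff_not_dvd.mpr (Nat.not_dvd_of_pos_of_lt hk0 hkp)).symm
  rw [conjChar_eq_inv]
  refine sum_Icc_eq_zero_of_apply_sub_eq_neg p _ fun j hj => ?_
  obtain ⟨hj1, hjp⟩ := mem_Icc.mp hj
  rw [Nat.sub_sub_self (by omega)]
  refine deltaChar_mul_deltaChar_inv_of_eq_neg hχodd (hcoprime _ (by omega) (by omega))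
    (hcoprime j (by omega) (by omega)) ?_
  rw [Nat.cast_sub (by omega), ZMod.natCast_self, zero_sub, neg_neg]
end
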